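/- arXiv:2601.14947 — 3 statements merged into one kernel-verified Lean document; each statement's English description precedes it below -/
import Mathlib

section
/- Let X be a real-valued random variable with cumulative distribution function F. Then the integral over R of min(F(x), 1 - F(x^-)) dx is finite if and only if E|X| < ∞, where F(x^-) denotes the left limit of F at x. -/
/-!
Write `F x = P (-∞, x]` and `G x = P [x, ∞)`. The layer-cake formula gives
`E|X| = ∫_{x<0} F + ∫_{x≥0} G`, and the depth `min F G` is dominated by these two tails.
Conversely `G ≥ 1/2` near `-∞` and `F ≥ 1/2` near `+∞`, so there each tail is at most twice
the depth, while on the remaining bounded interval it is at most `1`.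
-/

open MeasureTheory Set Filter
open scoped ENNReal Topology

lemma ENNReal.le_two_mul_min {a b : ℝ≥0∞} (ha : a ≤ 1) (hb : 2⁻¹ ≤ b) : a ≤ 2 * min a b :=
  calc a = 2 * (a / 2) := (ENNReal.mul_div_cancel two_ne_zero ENNReal.ofNat_ne_top).symm
    _ ≤ 2 * min a b := by
      gcongr
      refine le_min ENNReal.half_le_self (le_trans ?_ hb)
      simpa [one_div] using ENNReal.div_le_div_right ha 2

lemma setLIntegral_union_le_two_mul_lintegral_min {f g : ℝ → ℝ≥0∞} (hf : ∀ x, f x ≤ 1)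
    {s t : Set ℝ} (hs : MeasurableSet s) (hg : ∀ x ∈ s, 2⁻¹ ≤ g x) :
    ∫⁻ x in s ∪ t, f x ≤ volume t + 2 * ∫⁻ x, min (f x) (g x) :=
  calc ∫⁻ x in s ∪ t, f x ≤ (∫⁻ x in s, f x) + ∫⁻ x in t, f x := lintegral_union_le f s t
    _ ≤ (∫⁻ x in s, 2 * min (f x) (g x)) + ∫⁻ _ in t, 1 :=
      add_le_add (setLIntegral_mono' hs fun x hx => ENNReal.le_two_mul_min (hf x) (hg x hx))
        (lintegral_mono hf)
    _ ≤ volume t + 2 * ∫⁻ x, min (f x) (g x) := by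
      rw [setLIntegral_one, ← lintegral_const_mul' _ _ ENNReal.ofNat_ne_top, add_comm]
      exact add_le_add_right (setLIntegral_le_lintegral _ _) _

theorem lintegral_min_lt_top_iff {f g : ℝ → ℝ≥0∞} (hf : ∀ x, f x ≤ 1) (hg : ∀ x, g x ≤ 1)
    (hf_top : Tendsto f atTop (𝓝 1)) (hg_bot : Tendsto g atBot (𝓝 1)) :
    ∫⁻ x, min (f x) (g x) < ∞ ↔ (∫⁻ x in Iio 0, f x) < ∞ ∧ ∫⁻ x in Ici 0, g x < ∞ := by
  constructor
  · intro h
    have half_lt_one : (2⁻¹ : ℝ≥0∞) < 1 := by norm_num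
    obtain ⟨b, hb⟩ := (hg_bot.eventually_const_le half_lt_one).exists_forall_of_atBot
    obtain ⟨a, ha⟩ := (hf_top.eventually_const_le half_lt_one).exists_forall_of_atTop
    have hIio : Iio 0 ⊆ Iic b ∪ Icc b 0 := fun x hx => by
      rcases le_total x b with hxb | hxb
      exacts [Or.inl hxb, Or.inr ⟨hxb, hx.le⟩]
    have hIci : Ici 0 ⊆ Ici a ∪ Icc 0 a := fun x hx => by
      rcases le_total a x with hax | hax
      exacts [Or.inl hax, Or.inr ⟨hx, hax⟩]
    have h' : ∫⁻ x, min (g x) (f x) < ∞ := by simpa only [min_comm] using h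
    refine ⟨(lintegral_mono_set hIio).trans_lt ?_, (lintegral_mono_set hIci).trans_lt ?_⟩
    · exact (setLIntegral_union_le_two_mul_lintegral_min hf measurableSet_Iic hb).trans_lt
        (ENNReal.add_lt_top.2 ⟨measure_Icc_lt_top, ENNReal.mul_lt_top ENNReal.ofNat_lt_top h⟩)
    · exact (setLIntegral_union_le_two_mul_lintegral_min hg measurableSet_Ici ha).trans_lt
        (ENNReal.add_lt_top.2 ⟨measure_Icc_lt_top, ENNReal.mul_lt_top ENNReal.ofNat_lt_top h'⟩)
  · rintro ⟨hf_int, hg_int⟩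
    calc ∫⁻ x, min (f x) (g x) = ∫⁻ x in Iio 0 ∪ Ici 0, min (f x) (g x) := by
          rw [Iio_union_Ici, setLIntegral_univ]
      _ ≤ (∫⁻ x in Iio 0, min (f x) (g x)) + ∫⁻ x in Ici 0, min (f x) (g x) :=
          lintegral_union_le _ _ _
      _ ≤ (∫⁻ x in Iio 0, f x) + ∫⁻ x in Ici 0, g x :=
          add_le_add (lintegral_mono fun _ => min_le_left _ _)
            (lintegral_mono fun _ => min_le_right _ _)
      _ < ∞ := ENNReal.add_lt_top.2 ⟨hf_int, hg_int⟩

theorem lintegral_enorm_eq_lintegral_Iio_add_lintegral_Ici (μ : Measure ℝ) :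
    ∫⁻ x, ‖x‖ₑ ∂μ = (∫⁻ x in Iio 0, μ (Iic x)) + ∫⁻ x in Ici 0, μ (Ici x) := by
  have h_abs (t : ℝ) : {a : ℝ | t ≤ |a|} = Iic (-t) ∪ Ici t := by ext; simp [le_abs']
  have h_reflect : ∫⁻ t in Ioi 0, μ (Iic (-t)) = ∫⁻ x in Iio 0, μ (Iic x) := by
    simpa using (Measure.measurePreserving_neg volume).setLIntegral_comp_preimage_emb
      (MeasurableEquiv.neg ℝ).measurableEmbedding (fun x => μ (Iic x)) (Iio 0)
  calc ∫⁻ x, ‖x‖ₑ ∂μ = ∫⁻ t in Ioi 0, μ {a | t ≤ |a|} := by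
        simp_rw [Real.enorm_eq_ofReal_abs]
        exact lintegral_eq_lintegral_meas_le μ (ae_of_all _ abs_nonneg)
          measurable_abs.aemeasurable
    _ = ∫⁻ t in Ioi 0, (μ (Iic (-t)) + μ (Ici t)) := by
        refine setLIntegral_congr_fun measurableSet_Ioi fun t (ht : 0 < t) => ?_
        rw [h_abs, measure_union (Iic_disjoint_Ici.2 (by linarith)) measurableSet_Ici]
    _ = (∫⁻ t in Ioi 0, μ (Iic (-t))) + ∫⁻ t in Ioi 0, μ (Ici t) :=
        lintegral_add_right _ (Antitone.measurable fun _ _ h => measure_mono (Ici_subset_Ici.2 h))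
    _ = (∫⁻ x in Iio 0, μ (Iic x)) + ∫⁻ x in Ici 0, μ (Ici x) := by
        rw [h_reflect, setLIntegral_congr Ioi_ae_eq_Ici]

/-- For a real random variable `X ~ P` with cdf `F x = P(Iic x)`, the integral over `ℝ` of the
univariate halfspace depth `min (F x) (1 - F (x⁻))` is finite if and only if `E|X| < ∞`. -/
theorem halfspace_dispersion_finite_iff_integrable
    (P : Measure ℝ) [IsProbabilityMeasure P] :
    (∫⁻ x : ℝ, min (P (Iic x)) (1 - P (Iio x))) < ⊤ ↔
      Integrable (fun x : ℝ => x) P := by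
  have h_upper (x : ℝ) : 1 - P (Iio x) = P (Ici x) := by
    rw [← prob_compl_eq_one_sub measurableSet_Iio, compl_Iio]
  have h_tendsto_top := tendsto_measure_Iic_atTop P
  have h_tendsto_bot := tendsto_measure_Ici_atBot P
  rw [measure_univ] at h_tendsto_top h_tendsto_bot
  simp_rw [h_upper]
  rw [lintegral_min_lt_top_iff (fun _ => prob_le_one) (fun _ => prob_le_one)
    h_tendsto_top h_tendsto_bot, ← ENNReal.add_lt_top,
    ← lintegral_enorm_eq_lintegral_Iio_add_lintegral_Ici, ← hasFiniteIntegral_iff_enorm]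
  exact ⟨fun h => ⟨aestronglyMeasurable_id, h⟩, Integrable.hasFiniteIntegral⟩
end

section
/- Let (P_n) be probability measures on R^m converging weakly to P, with random variables X_n ~ P_n satisfying limsup_n E[‖X_n‖] < ∞, and let B_q^k → B_q be q × m matrices with orthonormal rows. Then the pushforward measures (P_n) under x ↦ B_q^k x converge weakly to the pushforward of P under x ↦ B_q x, as n, k → ∞. -/
/-!
The pushforward of `μ` under `x ↦ A x` is the image of `μ ⊗ δ_A` under the jointly continuous
evaluation `(x, A) ↦ A x`. Products of probability measures, Dirac masses and pushforwards along
continuous maps are all continuous for weak convergence, so `(μ, A) ↦ μ.map (A ·)` is jointly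
continuous, and it remains to evaluate it along `(Pₙ, B_k) → (P, B)`.
-/

open MeasureTheory Filter Topology TopologicalSpace

namespace Matrix

variable {m n R : Type*} [TopologicalSpace R]

instance [Countable m] [Countable n] [SecondCountableTopology R] :
    SecondCountableTopology (Matrix m n R) :=
  inferInstanceAs (SecondCountableTopology (m → n → R))

instance [Finite m] [Finite n] [PseudoMetrizableSpace R] :
    PseudoMetrizableSpace (Matrix m n R) :=
  inferInstanceAs (PseudoMetrizableSpace (m → n → R))

end Matrix

namespace MeasureTheory.ProbabilityMeasure

variable {X Y Z : Type*} [MeasurableSpace X] [TopologicalSpace X] [OpensMeasurableSpace X]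
  [SecondCountableTopology X] [TopologicalSpace Y] [SecondCountableTopology Y]
  [MeasurableSpace Z] [TopologicalSpace Z] [BorelSpace Z]

lemma map_prod_diracProba [MeasurableSpace Y] [OpensMeasurableSpace Y]
    {g : Y → X → Z} (hg : Continuous (Function.uncurry g)) (μ : ProbabilityMeasure X) (y : Y) :
    (μ.prod (diracProba y)).map (hg.comp continuous_swap).measurable.aemeasurable =
      μ.map (hg.uncurry_left y).measurable.aemeasurable := by
  apply Subtype.ext
  change Measure.map _ ((μ : Measure X).prod (Measure.dirac y)) = Measure.map _ _
  rw [Measure.prod_dirac, Measure.map_map (hg.comp continuous_swap).measurable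
    measurable_prodMk_right]
  rfl

variable [PseudoMetrizableSpace X] [PseudoMetrizableSpace Y]

theorem continuous_map_of_continuous_uncurry {g : Y → X → Z}
    (hg : Continuous (Function.uncurry g)) :
    Continuous (fun p : ProbabilityMeasure X × Y ↦
      p.1.map (hg.uncurry_left p.2).measurable.aemeasurable) := by
  borelize Y
  simp_rw [← map_prod_diracProba hg]
  exact (continuous_map (hg.comp continuous_swap)).comp
    (continuous_prod.comp (continuous_fst.prodMk (continuous_diracProba.comp continuous_snd)))

end MeasureTheory.ProbabilityMeasure

theorem weak_convergence_of_projections_general {m q : ℕ}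
    (P : ℕ → Measure (EuclideanSpace ℝ (Fin m)))
    (hP : ∀ n, IsProbabilityMeasure (P n))
    (Plim : Measure (EuclideanSpace ℝ (Fin m))) [IsProbabilityMeasure Plim]
    (hweak : ∀ f : BoundedContinuousFunction (EuclideanSpace ℝ (Fin m)) ℝ,
      Tendsto (fun n => ∫ x, f x ∂(P n)) atTop (𝓝 (∫ x, f x ∂Plim)))
    (B : ℕ → Matrix (Fin q) (Fin m) ℝ)
    (Blim : Matrix (Fin q) (Fin m) ℝ)
    (hBconv : Tendsto B atTop (𝓝 Blim)) :
    ∀ f : BoundedContinuousFunction (EuclideanSpace ℝ (Fin q)) ℝ,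
      Tendsto
        (fun nk : ℕ × ℕ => ∫ y, f y ∂((P nk.1).map
          (fun x => (WithLp.toLp 2 ((B nk.2).mulVec (WithLp.ofLp x)) : EuclideanSpace ℝ (Fin q)))))
        (atTop ×ˢ atTop)
        (𝓝 (∫ y, f y ∂(Plim.map
          (fun x => (WithLp.toLp 2 (Blim.mulVec (WithLp.ofLp x)) : EuclideanSpace ℝ (Fin q)))))) := by
  let μ : ℕ → ProbabilityMeasure (EuclideanSpace ℝ (Fin m)) := fun n ↦ ⟨P n, hP n⟩
  have hμ : Tendsto μ atTop (𝓝 ⟨Plim, inferInstance⟩) :=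
    ProbabilityMeasure.tendsto_iff_forall_integral_tendsto.mpr hweak
  have hmulVec : Continuous (Function.uncurry fun (A : Matrix (Fin q) (Fin m) ℝ)
      (x : EuclideanSpace ℝ (Fin m)) ↦ (WithLp.toLp 2 (A.mulVec (WithLp.ofLp x)) :
        EuclideanSpace ℝ (Fin q))) := by
    fun_prop
  have hpush := ((ProbabilityMeasure.continuous_map_of_continuous_uncurry hmulVec).tendsto _).comp
    ((hμ.prodMap hBconv).mono_right nhds_prod_eq.ge)
  exact ProbabilityMeasure.tendsto_iff_forall_integral_tendsto.mp hpush

/-- Weak convergence of projected measures: if `Pₙ → P` weakly, the first moments of the `Pₙ`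
are bounded (limsup finite), and `B_q^k → B_q` are matrices with orthonormal rows, then the
pushforwards of `Pₙ` under `x ↦ B_q^k x` converge weakly to the pushforward of `P` under
`x ↦ B_q x` as `n, k → ∞`. -/
theorem weak_convergence_of_projections {m q : ℕ}
    (P : ℕ → Measure (EuclideanSpace ℝ (Fin m)))
    (hP : ∀ n, IsProbabilityMeasure (P n))
    (Plim : Measure (EuclideanSpace ℝ (Fin m))) [IsProbabilityMeasure Plim]
    (hweak : ∀ f : BoundedContinuousFunction (EuclideanSpace ℝ (Fin m)) ℝ,
      Tendsto (fun n => ∫ x, f x ∂(P n)) atTop (𝓝 (∫ x, f x ∂Plim)))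
    (hmom : limsup (fun n => ∫⁻ x, ENNReal.ofReal ‖x‖ ∂(P n)) atTop < ⊤)
    (B : ℕ → Matrix (Fin q) (Fin m) ℝ) (hB : ∀ k, B k * (B k).transpose = 1)
    (Blim : Matrix (Fin q) (Fin m) ℝ) (hBlim : Blim * Blim.transpose = 1)
    (hBconv : Tendsto B atTop (𝓝 Blim)) :
    ∀ f : BoundedContinuousFunction (EuclideanSpace ℝ (Fin q)) ℝ,
      Tendsto
        (fun nk : ℕ × ℕ => ∫ y, f y ∂((P nk.1).map
          (fun x => (WithLp.toLp 2 ((B nk.2).mulVec (WithLp.ofLp x)) : EuclideanSpace ℝ (Fin q)))))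
        (atTop ×ˢ atTop)
        (𝓝 (∫ y, f y ∂(Plim.map
          (fun x => (WithLp.toLp 2 (Blim.mulVec (WithLp.ofLp x)) : EuclideanSpace ℝ (Fin q)))))) :=
  weak_convergence_of_projections_general P hP Plim hweak B Blim hBconv
end

section
/- Let X have an absolutely continuous elliptically symmetric distribution F on R^m with mean μ and positive definite covariance Σ, whose depth function has the form d(x, F) = g((x-μ)^T Σ^{-1}(x-μ)) for a non-increasing function g ≥ 0 with ∫_{R^m} d(x,F) dx < ∞. Let λ₁ ≥ ... ≥ λ_m be the eigenvalues of Σ with orthonormal eigenvectors u₁, ..., u_m. Then among all q × m matrices B_q with orthonormal rows, the dispersion measure σ(F_{B_q}) = ∫_{R^q} g((y - B_qμ)^T (B_q Σ B_q^T)^{-1}(y - B_qμ)) dy is minimized when the row space of B_q is spanned by the eigenvectors u_{m-q+1}, ..., u_m corresponding to the q smallest eigenvalues. -/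
open MeasureTheory Matrix

/-- The `q × m` matrix whose rows are `u_{m-q+1}, …, u_m` (the last `q` of the given vectors
`u_1, …, u_m`). -/
def lastRowsMatrix {m q : ℕ} (hqm : q ≤ m) (u : Fin m → Fin m → ℝ) :
    Matrix (Fin q) (Fin m) ℝ :=
  fun i j => u ⟨m - q + i.val, by have := i.isLt; omega⟩ j

/-- The dispersion measure of the projection along `B` of an elliptically symmetric
distribution with mean `μ`, covariance `Σ`, and depth `g` of the Mahalanobis distance:
`σ(F_B) = ∫_{ℝ^q} g((y - Bμ)ᵀ (B Σ Bᵀ)⁻¹ (y - Bμ)) dy`. -/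
noncomputable def ellipticalDispersion {m q : ℕ} (g : ℝ → ℝ) (μv : Fin m → ℝ)
    (S : Matrix (Fin m) (Fin m) ℝ) (B : Matrix (Fin q) (Fin m) ℝ) : ENNReal :=
  ∫⁻ y : Fin q → ℝ, ENNReal.ofReal
    (g ((y - B.mulVec μv) ⬝ᵥ (B * S * B.transpose)⁻¹.mulVec (y - B.mulVec μv)))

/-! ### Auxiliary lemmas -/

lemma measurable_quad {q : ℕ} (A : Matrix (Fin q) (Fin q) ℝ) :
    Measurable fun y : Fin q → ℝ => y ⬝ᵥ A.mulVec y := by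
  simp only [dotProduct, Matrix.mulVec]
  fun_prop

open scoped MatrixOrder in
/-- Change of variables: the integral of `g` of the Mahalanobis-type quadratic form of a
positive definite matrix `C` equals `√(det C)` times the integral of `g(‖z‖²)`. -/
lemma lintegral_quad {q : ℕ} (g : ℝ → ℝ) (hganti : Antitone g)
    (C : Matrix (Fin q) (Fin q) ℝ) (hC : C.PosDef) (v : Fin q → ℝ) :
    ∫⁻ y : Fin q → ℝ, ENNReal.ofReal (g ((y - v) ⬝ᵥ C⁻¹.mulVec (y - v)))
      = ENNReal.ofReal (Real.sqrt C.det) * ∫⁻ z : Fin q → ℝ, ENNReal.ofReal (g (z ⬝ᵥ z)) := by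
  have htrans : ∫⁻ y : Fin q → ℝ, ENNReal.ofReal (g ((y - v) ⬝ᵥ C⁻¹.mulVec (y - v)))
      = ∫⁻ y : Fin q → ℝ, ENNReal.ofReal (g (y ⬝ᵥ C⁻¹.mulVec y)) := by
    simp_rw [sub_eq_add_neg]
    exact lintegral_add_right_eq_self (fun y => ENNReal.ofReal (g (y ⬝ᵥ C⁻¹.mulVec y))) (-v)
  rw [htrans]
  set R := CFC.sqrt C with hRdef
  have hRR : R * R = C := CFC.sqrt_mul_sqrt_self C hC.posSemidef.nonneg
  have hRps : R.PosSemidef := (CFC.sqrt_nonneg C).posSemidef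
  have hRsym : Rᵀ = R := by
    have := hRps.isHermitian
    rwa [Matrix.IsHermitian, Matrix.conjTranspose_eq_transpose_of_trivial] at this
  have hdetC : 0 < C.det := hC.det_pos
  have hdetR2 : R.det * R.det = C.det := by rw [← Matrix.det_mul, hRR]
  have hdetRnn : 0 ≤ R.det := by
    rw [hRps.isHermitian.det_eq_prod_eigenvalues]
    exact Finset.prod_nonneg fun i _ => hRps.eigenvalues_nonneg i
  have hdetR : 0 < R.det := by
    rcases lt_or_eq_of_le hdetRnn with h | h
    · exact h
    · exfalso; rw [← h] at hdetR2; simp at hdetR2; linarith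
  have hdetRsqrt : R.det = Real.sqrt C.det := by
    rw [← hdetR2, Real.sqrt_mul_self hdetRnn]
  have hRdet0 : R.det ≠ 0 := hdetR.ne'
  have hRinvR : R⁻¹ * R = 1 := Matrix.nonsing_inv_mul R hRdet0.isUnit
  have hRRinv : R * R⁻¹ = 1 := Matrix.mul_nonsing_inv R hRdet0.isUnit
  have hCinv : C⁻¹ = R⁻¹ * R⁻¹ := by rw [← hRR, Matrix.mul_inv_rev]
  have hquad : ∀ z : Fin q → ℝ, (R.mulVec z) ⬝ᵥ C⁻¹.mulVec (R.mulVec z) = z ⬝ᵥ z := by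
    intro z
    have h1 : (R⁻¹ * R⁻¹) *ᵥ (R *ᵥ z) = R⁻¹ *ᵥ z := by
      rw [Matrix.mulVec_mulVec, Matrix.mul_assoc, hRinvR, Matrix.mul_one]
    rw [hCinv, h1, dotProduct_comm, Matrix.dotProduct_mulVec, ← Matrix.mulVec_transpose,
      hRsym, Matrix.mulVec_mulVec, hRRinv, Matrix.one_mulVec]
  set T : (Fin q → ℝ) →ₗ[ℝ] (Fin q → ℝ) := Matrix.toLin' R with hTdef
  have hTdet : LinearMap.det T = R.det := LinearMap.det_toLin' R
  have hTdet0 : LinearMap.det T ≠ 0 := by rw [hTdet]; exact hRdet0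
  have hmap := Measure.map_linearMap_addHaar_pi_eq_smul_addHaar (f := T) hTdet0
    (volume : Measure (Fin q → ℝ))
  have hFmeas : Measurable fun y : Fin q → ℝ => ENNReal.ofReal (g (y ⬝ᵥ C⁻¹.mulVec y)) :=
    (ENNReal.measurable_ofReal.comp (hganti.measurable.comp (measurable_quad C⁻¹)))
  have hTmeas : Measurable T := T.continuous_of_finiteDimensional.measurable
  have hlm : ∫⁻ z : Fin q → ℝ, ENNReal.ofReal (g ((T z) ⬝ᵥ C⁻¹.mulVec (T z)))
      = ENNReal.ofReal (R.det)⁻¹ * ∫⁻ y : Fin q → ℝ, ENNReal.ofReal (g (y ⬝ᵥ C⁻¹.mulVec y)) := by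
    rw [← lintegral_map hFmeas hTmeas, hmap, lintegral_smul_measure, hTdet,
      abs_of_pos (inv_pos.mpr hdetR), smul_eq_mul]
  have hsub : ∀ z : Fin q → ℝ, (T z) ⬝ᵥ C⁻¹.mulVec (T z) = z ⬝ᵥ z := by
    intro z; rw [hTdef, Matrix.toLin'_apply]; exact hquad z
  simp_rw [hsub] at hlm
  rw [← hdetRsqrt]
  rw [hlm, ← mul_assoc, ← ENNReal.ofReal_mul hdetRnn, mul_inv_cancel₀ hRdet0]
  simp

open scoped Classical in
/-- Cauchy–Binet-type expansion of `det (C D Cᵀ)` for a diagonal matrix `D`, as a sum over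
strictly monotone selections of `q` columns. -/
lemma det_mul_diag_mul_transpose {q m : ℕ} (C : Matrix (Fin q) (Fin m) ℝ) (d : Fin m → ℝ) :
    (C * Matrix.diagonal d * Cᵀ).det
      = ∑ ψ ∈ Finset.univ.filter (fun ψ : Fin q → Fin m => StrictMono ψ),
          (∏ a, d (ψ a)) * (C.submatrix id ψ).det ^ 2 := by
  -- the generic term of the multilinear expansion
  set F : (Fin q → Fin m) → ℝ :=
    fun φ => (∏ a, d (φ a) * C a (φ a)) * (Matrix.of fun a b => C b (φ a)).det with hF
  -- Step 1: multilinear expansion over choices of columns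
  have h1 : (C * Matrix.diagonal d * Cᵀ).det = ∑ φ : Fin q → Fin m, F φ := by
    show Matrix.detRowAlternating (C * Matrix.diagonal d * Cᵀ) = _
    have hrow : (C * Matrix.diagonal d * Cᵀ)
        = fun a => ∑ k : Fin m, (d k * C a k) • (fun b => C b k) := by
      funext a b
      simp only [Finset.sum_apply, Pi.smul_apply, smul_eq_mul]
      rw [Matrix.mul_apply]
      congr 1; funext j
      rw [Matrix.mul_diagonal, Matrix.transpose_apply]
      ring
    rw [hrow]
    rw [show (Matrix.detRowAlternating
          (fun a => ∑ k : Fin m, (d k * C a k) • (fun b : Fin q => C b k)))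
        = Matrix.detRowAlternating.toMultilinearMap
          (fun a => ∑ k : Fin m, (d k * C a k) • (fun b : Fin q => C b k)) from rfl,
      MultilinearMap.map_sum]
    refine Finset.sum_congr rfl fun φ _ => ?_
    rw [show (Matrix.detRowAlternating.toMultilinearMap
          fun a => (d (φ a) * C a (φ a)) • (fun b : Fin q => C b (φ a)))
        = Matrix.detRowAlternating.toMultilinearMap
          fun a => (fun a' => d (φ a') * C a' (φ a')) a •
            ((fun a' => (fun b : Fin q => C b (φ a'))) a) from rfl,
      MultilinearMap.map_smul_univ]
    rfl
  -- Step 2: only injective selections contribute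
  have h2 : ∑ φ : Fin q → Fin m, F φ
      = ∑ φ ∈ Finset.univ.filter (fun φ : Fin q → Fin m => Function.Injective φ), F φ := by
    symm
    apply Finset.sum_filter_of_ne
    intro φ _ hFne
    by_contra hinj
    apply hFne
    rw [Function.not_injective_iff] at hinj
    obtain ⟨a, b, hab, hne⟩ := hinj
    simp only [hF]
    rw [Matrix.det_zero_of_row_eq hne (by funext c; simp [hab]), mul_zero]
  -- Step 3: group injective selections as (monotone selection) ∘ (permutation)
  have h3 : ∑ p ∈ (Finset.univ.filter (fun ψ : Fin q → Fin m => StrictMono ψ)) ×ˢ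
        (Finset.univ : Finset (Equiv.Perm (Fin q))), F (p.1 ∘ p.2)
      = ∑ φ ∈ Finset.univ.filter (fun φ : Fin q → Fin m => Function.Injective φ), F φ := by
    refine Finset.sum_bij (fun p _ => p.1 ∘ p.2) ?_ ?_ ?_ ?_
    · rintro ⟨ψ, σ⟩ hp
      simp only [Finset.mem_product, Finset.mem_filter, Finset.mem_univ, true_and] at hp ⊢
      exact (hp.1.injective).comp σ.injective
    · rintro ⟨ψ₁, σ₁⟩ h₁ ⟨ψ₂, σ₂⟩ h₂ heq
      simp only [Finset.mem_product, Finset.mem_filter, Finset.mem_univ, true_and] at h₁ h₂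
      obtain ⟨hm₁, -⟩ := h₁
      obtain ⟨hm₂, -⟩ := h₂
      have heq' : ψ₁ ∘ ⇑σ₁ = ψ₂ ∘ ⇑σ₂ := heq
      have himg : Finset.image ψ₁ Finset.univ = Finset.image ψ₂ Finset.univ := by
        have e1 : Finset.image (ψ₁ ∘ σ₁) Finset.univ = Finset.image ψ₁ Finset.univ := by
          rw [← Finset.image_image]
          congr 1
          exact Finset.image_univ_equiv σ₁
        have e2 : Finset.image (ψ₂ ∘ σ₂) Finset.univ = Finset.image ψ₂ Finset.univ := by
          rw [← Finset.image_image]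
          congr 1
          exact Finset.image_univ_equiv σ₂
        rw [← e1, ← e2, heq']
      have hcard : (Finset.image ψ₁ Finset.univ).card = q := by
        rw [Finset.card_image_of_injective _ hm₁.injective, Finset.card_univ, Fintype.card_fin]
      have hcard2 : (Finset.image ψ₂ Finset.univ).card = q := himg ▸ hcard
      have e3 := Finset.orderEmbOfFin_unique hcard2
        (fun x => by rw [← himg]; exact Finset.mem_image_of_mem ψ₁ (Finset.mem_univ x)) hm₁
      have e4 := Finset.orderEmbOfFin_unique hcard2
        (fun x => Finset.mem_image_of_mem ψ₂ (Finset.mem_univ x)) hm₂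
      have hψ : ψ₁ = ψ₂ := e3.trans e4.symm
      subst hψ
      have hσ : σ₁ = σ₂ := by
        apply Equiv.ext
        intro a
        exact hm₁.injective (congrFun heq' a)
      rw [hσ]
    · intro φ hφ
      simp only [Finset.mem_filter, Finset.mem_univ, true_and] at hφ
      set s := Finset.image φ Finset.univ with hs_def
      have hs : s.card = q := by
        rw [hs_def, Finset.card_image_of_injective _ hφ, Finset.card_univ, Fintype.card_fin]
      have hmem : ∀ a, φ a ∈ s := fun a => Finset.mem_image_of_mem φ (Finset.mem_univ a)
      set τ : Fin q → Fin q := fun a => (s.orderIsoOfFin hs).symm ⟨φ a, hmem a⟩ with hτ_def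
      have hτinj : Function.Injective τ := by
        intro a b hab
        have h2' : (⟨φ a, hmem a⟩ : {x // x ∈ s}) = ⟨φ b, hmem b⟩ :=
          (s.orderIsoOfFin hs).symm.injective hab
        exact hφ (congrArg Subtype.val h2')
      refine ⟨⟨fun b => s.orderEmbOfFin hs b,
        Equiv.ofBijective τ (Finite.injective_iff_bijective.mp hτinj)⟩, ?_, ?_⟩
      · simp only [Finset.mem_product, Finset.mem_filter, Finset.mem_univ, true_and]
        exact ⟨(s.orderEmbOfFin hs).strictMono, trivial⟩
      · funext a
        show s.orderEmbOfFin hs (τ a) = φ a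
        rw [hτ_def]
        rw [← Finset.coe_orderIsoOfFin_apply, OrderIso.apply_symm_apply]
    · intro p _
      rfl
  -- Step 4: evaluate the inner sum over permutations
  have h5 : ∀ ψ : Fin q → Fin m, ∑ σ : Equiv.Perm (Fin q), F (ψ ∘ σ)
      = (∏ a, d (ψ a)) * (C.submatrix id ψ).det ^ 2 := by
    intro ψ
    set N : Matrix (Fin q) (Fin q) ℝ := Matrix.of fun a b => C b (ψ a) with hN
    have hNdet : N.det = (C.submatrix id ψ).det := by
      rw [← Matrix.det_transpose]; congr 1
    have hterm : ∀ σ : Equiv.Perm (Fin q), F (ψ ∘ σ)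
        = (∏ a, d (ψ a)) * N.det * ((Equiv.Perm.sign σ : ℝ) * ∏ a, C a (ψ (σ a))) := by
      intro σ
      simp only [hF]
      have hdet : (Matrix.of fun a b => C b ((ψ ∘ σ) a)).det
          = (Equiv.Perm.sign σ : ℝ) * N.det := by
        rw [show (Matrix.of fun a b => C b ((ψ ∘ σ) a)) = N.submatrix σ id from rfl,
          Matrix.det_permute]
      rw [hdet]
      rw [show (∏ a, d ((ψ ∘ σ) a) * C a ((ψ ∘ σ) a))
          = (∏ a, d (ψ (σ a))) * ∏ a, C a (ψ (σ a)) from Finset.prod_mul_distrib]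
      rw [Equiv.prod_comp σ (fun a => d (ψ a))]
      ring
    rw [Finset.sum_congr rfl (fun σ _ => hterm σ), ← Finset.mul_sum]
    have hsum : ∑ σ : Equiv.Perm (Fin q), (Equiv.Perm.sign σ : ℝ) * ∏ a, C a (ψ (σ a))
        = N.det := by
      rw [Matrix.det_apply']
      rfl
    rw [hsum, hNdet]
    ring
  rw [h1, h2, ← h3, Finset.sum_product]
  exact Finset.sum_congr rfl fun ψ _ => h5 ψ

/-- A strictly monotone map `Fin q → Fin m` satisfies `φ a ≤ m - q + a`. -/
lemma strictMono_le_shift {q m : ℕ} {φ : Fin q → Fin m} (hφ : StrictMono φ) (a : Fin q) :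
    (φ a : ℕ) ≤ m - q + a.val := by
  have hle : ∀ {q' m' : ℕ} (f : Fin q' → Fin m'), StrictMono f → ∀ a : Fin q', a.val ≤ (f a).val := by
    intro q' m' f hf a
    have key : ∀ k, ∀ (h : k < q'), k ≤ (f ⟨k, h⟩ : ℕ) := by
      intro k
      induction k with
      | zero => intro h; exact Nat.zero_le _
      | succ n ih =>
        intro h
        have h1 : n < q' := lt_trans (Nat.lt_succ_self n) h
        have h2 := ih h1
        have h3 : f ⟨n, h1⟩ < f ⟨n+1, h⟩ := hf (by simp [Fin.lt_def])
        simp only [Fin.lt_def] at h3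
        omega
    have := key a.val a.isLt
    simpa using this
  have hψ : StrictMono (fun j : Fin q => (φ j.rev).rev) := by
    intro i j hij
    simp only [Fin.lt_def, Fin.val_rev]
    have h1 : j.rev < i.rev := by
      simp only [Fin.lt_def, Fin.val_rev]
      omega
    have h2 := hφ h1
    have h3 := (φ j.rev).isLt
    have h4 := (φ i.rev).isLt
    simp only [Fin.lt_def] at h2
    omega
  have := hle _ hψ a.rev
  simp only [Fin.val_rev, Fin.rev_rev] at this
  have h5 := (φ a).isLt
  have h6 := a.isLt
  omega

/-- For an absolutely continuous elliptically symmetric distribution with mean `μ`, positive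
definite covariance `Σ` with eigenvalues `λ₁ ≥ … ≥ λ_m` and orthonormal eigenvectors
`u₁, …, u_m`, and depth `d(x,F) = g((x-μ)ᵀ Σ⁻¹ (x-μ))` with `g ≥ 0` non-increasing and
integrable depth, the dispersion `σ(F_{B_q})` over `q × m` matrices `B_q` with orthonormal
rows is minimized by the matrix whose rows are the eigenvectors `u_{m-q+1}, …, u_m`
corresponding to the `q` smallest eigenvalues. -/
theorem elliptical_dispersion_min_at_smallest_eigenvectors
    {m q : ℕ} (hq : 1 ≤ q) (hqm : q ≤ m)
    (S : Matrix (Fin m) (Fin m) ℝ) (hS : S.PosDef)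
    (μv : Fin m → ℝ)
    (g : ℝ → ℝ) (hg0 : ∀ t, 0 ≤ g t) (hganti : Antitone g)
    (lam : Fin m → ℝ) (u : Fin m → Fin m → ℝ)
    (hlam_dec : Antitone lam)
    (horth : ∀ i j, u i ⬝ᵥ u j = if i = j then (1 : ℝ) else 0)
    (heig : ∀ i, S.mulVec (u i) = lam i • u i)
    (hfin : (∫⁻ x : Fin m → ℝ,
      ENNReal.ofReal (g ((x - μv) ⬝ᵥ S⁻¹.mulVec (x - μv)))) < ⊤) :
    ∀ B : Matrix (Fin q) (Fin m) ℝ, B * B.transpose = 1 →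
      ellipticalDispersion g μv S (lastRowsMatrix hqm u) ≤
        ellipticalDispersion g μv S B := by
  classical
  intro B hB
  -- basic facts about the eigendecomposition
  have hSt : Sᵀ = S := by
    rw [← Matrix.conjTranspose_eq_transpose_of_trivial]; exact hS.1
  have hSymm : ∀ j k, S j k = S k j := by
    intro j k
    conv_lhs => rw [← hSt]
    exact Matrix.transpose_apply S j k
  set U : Matrix (Fin m) (Fin m) ℝ := Matrix.of u with hU
  have hUUT : U * Uᵀ = 1 := by
    ext i j
    rw [Matrix.mul_apply]
    have := horth i j
    simp only [dotProduct] at this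
    simp only [hU, Matrix.of_apply, Matrix.transpose_apply, this, Matrix.one_apply]
  have hUTU : Uᵀ * U = 1 := mul_eq_one_comm.mp hUUT
  have hSdec : S = Uᵀ * Matrix.diagonal lam * U := by
    have h1 : S * Uᵀ = Uᵀ * Matrix.diagonal lam := by
      ext i j
      rw [Matrix.mul_apply, Matrix.mul_diagonal, Matrix.transpose_apply]
      have h2 := congrFun (heig j) i
      simp only [Pi.smul_apply, smul_eq_mul] at h2
      calc ∑ k, S i k * Uᵀ k j = ∑ k, S i k * u j k := rfl
        _ = (S.mulVec (u j)) i := by rw [Matrix.mulVec]; rfl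
        _ = lam j * u j i := h2
        _ = u j i * lam j := mul_comm _ _
    calc S = S * (Uᵀ * U) := by rw [hUTU, Matrix.mul_one]
      _ = (S * Uᵀ) * U := by rw [Matrix.mul_assoc]
      _ = Uᵀ * Matrix.diagonal lam * U := by rw [h1]
  have hu_ne : ∀ i, u i ≠ 0 := by
    intro i h0
    have := horth i i
    rw [h0] at this
    simp at this
  have hlam_pos : ∀ i, 0 < lam i := by
    intro i
    have hpos := hS.dotProduct_mulVec_pos (hu_ne i)
    rw [star_trivial, heig i, dotProduct_smul, smul_eq_mul, horth i i] at hpos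
    simpa using hpos
  -- positive definiteness of compressions
  have hPD : ∀ B' : Matrix (Fin q) (Fin m) ℝ, B' * B'ᵀ = 1 → (B' * S * B'ᵀ).PosDef := by
    intro B' hB'
    refine Matrix.PosDef.of_dotProduct_mulVec_pos ?_ ?_
    · show (B' * S * B'ᵀ)ᴴ = B' * S * B'ᵀ
      rw [Matrix.conjTranspose_eq_transpose_of_trivial]
      calc (B' * S * B'ᵀ)ᵀ = B'ᵀᵀ * (Sᵀ * B'ᵀ) := by
            rw [Matrix.transpose_mul, Matrix.transpose_mul]
        _ = B' * S * B'ᵀ := by rw [Matrix.transpose_transpose, hSt, Matrix.mul_assoc]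
    · intro x hx
      have hBx : B'ᵀ *ᵥ x ≠ 0 := by
        intro h0
        apply hx
        have := congrArg (fun v => B' *ᵥ v) h0
        simpa [Matrix.mulVec_mulVec, hB'] using this
      have hpos := hS.dotProduct_mulVec_pos hBx
      rw [star_trivial] at hpos ⊢
      have h1 : (B' * S * B'ᵀ) *ᵥ x = B' *ᵥ (S *ᵥ (B'ᵀ *ᵥ x)) := by
        rw [Matrix.mulVec_mulVec, Matrix.mulVec_mulVec]
      rw [h1, Matrix.dotProduct_mulVec, ← Matrix.mulVec_transpose]
      exact hpos
  -- the common radial integral and the dispersion formula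
  set I : ENNReal := ∫⁻ z : Fin q → ℝ, ENNReal.ofReal (g (z ⬝ᵥ z)) with hI
  have hdisp : ∀ B' : Matrix (Fin q) (Fin m) ℝ, B' * B'ᵀ = 1 →
      ellipticalDispersion g μv S B'
        = ENNReal.ofReal (Real.sqrt (B' * S * B'ᵀ).det) * I := by
    intro B' hB'
    exact lintegral_quad g hganti (B' * S * B'ᵀ) (hPD B' hB') (B'.mulVec μv)
  -- the determinant lower bound
  set L : ℝ := ∏ a : Fin q, lam ⟨m - q + a.val, by have := a.isLt; omega⟩ with hL
  have hdet_ge : ∀ B' : Matrix (Fin q) (Fin m) ℝ, B' * B'ᵀ = 1 →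
      L ≤ (B' * S * B'ᵀ).det := by
    intro B' hB'
    set Cm : Matrix (Fin q) (Fin m) ℝ := B' * Uᵀ with hCm
    have hCC : Cm * Cmᵀ = 1 := by
      rw [hCm, Matrix.transpose_mul, Matrix.transpose_transpose, ← Matrix.mul_assoc,
        Matrix.mul_assoc B' Uᵀ U, hUTU, Matrix.mul_one, hB']
    have hBSB : B' * S * B'ᵀ = Cm * Matrix.diagonal lam * Cmᵀ := by
      rw [hSdec, hCm]
      simp only [Matrix.transpose_mul, Matrix.transpose_transpose, Matrix.mul_assoc]
    have hones : ∑ ψ ∈ Finset.univ.filter (fun ψ : Fin q → Fin m => StrictMono ψ),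
        (Cm.submatrix id ψ).det ^ 2 = 1 := by
      have h1 : (Cm * Matrix.diagonal (fun _ : Fin m => (1:ℝ)) * Cmᵀ).det = 1 := by
        rw [show Matrix.diagonal (fun _ : Fin m => (1:ℝ)) = (1 : Matrix (Fin m) (Fin m) ℝ) from
          Matrix.diagonal_one, Matrix.mul_one, hCC, Matrix.det_one]
      rw [det_mul_diag_mul_transpose] at h1
      simpa using h1
    rw [hBSB, det_mul_diag_mul_transpose]
    calc L = L * ∑ ψ ∈ Finset.univ.filter (fun ψ : Fin q → Fin m => StrictMono ψ),
          (Cm.submatrix id ψ).det ^ 2 := by rw [hones, mul_one]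
      _ = ∑ ψ ∈ Finset.univ.filter (fun ψ : Fin q → Fin m => StrictMono ψ),
          L * (Cm.submatrix id ψ).det ^ 2 := Finset.mul_sum _ _ _
      _ ≤ ∑ ψ ∈ Finset.univ.filter (fun ψ : Fin q → Fin m => StrictMono ψ),
          (∏ a, lam (ψ a)) * (Cm.submatrix id ψ).det ^ 2 := by
        apply Finset.sum_le_sum
        intro ψ hψ
        rw [Finset.mem_filter] at hψ
        apply mul_le_mul_of_nonneg_right _ (sq_nonneg _)
        rw [hL]
        apply Finset.prod_le_prod
        · intro a _; exact (hlam_pos _).le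
        · intro a _
          apply hlam_dec
          rw [Fin.le_def]
          exact strictMono_le_shift hψ.2 a
  -- the candidate matrix built from the last eigenvectors
  set B₀ : Matrix (Fin q) (Fin m) ℝ := lastRowsMatrix hqm u with hB₀
  have hB0orth : B₀ * B₀ᵀ = 1 := by
    ext a b
    rw [Matrix.mul_apply]
    have h1 : ∀ j, B₀ a j * B₀ᵀ j b
        = u ⟨m - q + a.val, by have := a.isLt; omega⟩ j *
          u ⟨m - q + b.val, by have := b.isLt; omega⟩ j := by
      intro j; rfl
    simp_rw [h1]
    have h2 := horth ⟨m - q + a.val, by have := a.isLt; omega⟩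
      ⟨m - q + b.val, by have := b.isLt; omega⟩
    simp only [dotProduct] at h2
    rw [h2]
    have hiff : (⟨m - q + a.val, by have := a.isLt; omega⟩ : Fin m)
        = ⟨m - q + b.val, by have := b.isLt; omega⟩ ↔ a = b := by
      constructor
      · intro h
        have := congrArg Fin.val h
        simp only at this
        exact Fin.ext (by omega)
      · intro h; rw [h]
    rw [Matrix.one_apply]
    by_cases hab : a = b
    · rw [if_pos (hiff.mpr hab), if_pos hab]
    · rw [if_neg (fun h => hab (hiff.mp h)), if_neg hab]
  have hB0S : ∀ (a : Fin q) (k : Fin m), (B₀ * S) a k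
      = lam ⟨m - q + a.val, by have := a.isLt; omega⟩ *
        u ⟨m - q + a.val, by have := a.isLt; omega⟩ k := by
    intro a k
    set i : Fin m := ⟨m - q + a.val, by have := a.isLt; omega⟩ with hi
    have h2 := congrFun (heig i) k
    simp only [Pi.smul_apply, smul_eq_mul] at h2
    calc (B₀ * S) a k = ∑ j, u i j * S j k := by rw [Matrix.mul_apply]; rfl
      _ = ∑ j, S k j * u i j := by congr 1; funext j; rw [hSymm j k]; ring
      _ = (S.mulVec (u i)) k := by rw [Matrix.mulVec]; rfl
      _ = lam i * u i k := h2
  have hB0SB0 : B₀ * S * B₀ᵀ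
      = Matrix.diagonal (fun a : Fin q => lam ⟨m - q + a.val, by have := a.isLt; omega⟩) := by
    ext a b
    rw [Matrix.mul_apply]
    set ia : Fin m := ⟨m - q + a.val, by have := a.isLt; omega⟩ with hia
    set ib : Fin m := ⟨m - q + b.val, by have := b.isLt; omega⟩ with hib
    have h1 : ∀ k, (B₀ * S) a k * B₀ᵀ k b = lam ia * (u ia k * u ib k) := by
      intro k
      rw [hB0S a k]
      show lam ia * u ia k * u ib k = _
      ring
    simp_rw [h1]
    rw [← Finset.mul_sum]
    have h2 := horth ia ib
    simp only [dotProduct] at h2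
    rw [h2]
    have hiff : ia = ib ↔ a = b := by
      constructor
      · intro h
        have := congrArg Fin.val h
        simp only [hia, hib] at this
        exact Fin.ext (by omega)
      · intro h; rw [hia, hib, h]
    rw [Matrix.diagonal_apply]
    by_cases hab : a = b
    · rw [if_pos (hiff.mpr hab), if_pos hab, mul_one]
    · rw [if_neg (fun h => hab (hiff.mp h)), if_neg hab, mul_zero]
  have hdetB0 : (B₀ * S * B₀ᵀ).det = L := by
    rw [hB0SB0, Matrix.det_diagonal]
  -- conclusion
  rw [show ellipticalDispersion g μv S (lastRowsMatrix hqm u)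
      = ellipticalDispersion g μv S B₀ from rfl,
    hdisp B₀ hB0orth, hdisp B hB, hdetB0]
  apply mul_le_mul_left
  apply ENNReal.ofReal_le_ofReal
  exact Real.sqrt_le_sqrt (hdet_ge B hB)
end
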